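/- arXiv:1312.2356 — 4 statements merged into one kernel-verified Lean document; each statement's English description precedes it below -/
import Mathlib

section
/- Every accumulation point φ* of the sequence {φ_k} generated by the projected gradient method φ_{k+1} = φ_k + β_k v_k, with v_k = P_U(φ_k − λ∇j(φ_k)) − φ_k and β_k chosen by the Armijo step length rule, is first-order critical, i.e., satisfies j'(φ*)(ψ − φ*) ≥ 0 for all ψ ∈ U. -/
/-!
The variational inequality of the projection makes `v = P (x - λ ∇j x) - x` a descent direction,
`λ j'(x) v + ‖v‖² ≤ 0` for `x ∈ U`, so the Armijo test gives the sufficient decrease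
`j φ_k - j φ_{k+1} ≥ (c / λ) β_k ‖v_k‖²`. As `j φ_k` decreases and converges along the
subsequence, `β_k ‖v_k‖² → 0`. If `v* = P (φ* - λ ∇j φ*) - φ*` were nonzero, the steps `β_k`
along the subsequence would tend to zero, so the Armijo test fails at the steps `β_k / σ → 0`;
the mean value theorem and the continuity of `j'` then give `c j'(φ*) v* ≥ j'(φ*) v*`, which
contradicts `j'(φ*) v* ≤ -‖v*‖² / λ < 0`. Hence `φ*` is a fixed point of the projected gradient
map, and that fixed-point property is the variational inequality `j'(φ*) (ψ - φ*) ≥ 0`.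
-/

open RealInnerProductSpace Filter Topology Set

def IsMetricProjection {H : Type*} [NormedAddCommGroup H] [InnerProductSpace ℝ H]
    (U : Set H) (P : H → H) : Prop :=
  ∀ x, P x ∈ U ∧ ∀ ψ ∈ U, ⟪x - P x, ψ - P x⟫ ≤ 0

namespace IsMetricProjection

variable {H : Type*} [NormedAddCommGroup H] [InnerProductSpace ℝ H] {U : Set H} {P : H → H}

theorem lipschitzWith_one (hP : IsMetricProjection U P) : LipschitzWith 1 P := by
  refine LipschitzWith.of_dist_le_mul fun x y => ?_
  rw [NNReal.coe_one, one_mul, dist_eq_norm, dist_eq_norm]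
  have hx := (hP x).2 (P y) (hP y).1
  have hy := (hP y).2 (P x) (hP x).1
  have key : ‖P x - P y‖ ^ 2 ≤ ‖x - y‖ * ‖P x - P y‖ := calc
    ‖P x - P y‖ ^ 2 = ⟪x - y, P x - P y⟫ + ⟪x - P x, P y - P x⟫ + ⟪y - P y, P x - P y⟫ := by
      rw [← real_inner_self_eq_norm_sq]
      simp only [inner_sub_left, inner_sub_right]
      ring
    _ ≤ ⟪x - y, P x - P y⟫ := by linarith
    _ ≤ ‖x - y‖ * ‖P x - P y‖ := real_inner_le_norm _ _
  nlinarith [norm_nonneg (x - y), norm_nonneg (P x - P y)]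

theorem inner_add_norm_sq_nonpos (hP : IsMetricProjection U P) {x : H} (hx : x ∈ U)
    (d : H) (lam : ℝ) :
    lam * ⟪d, P (x - lam • d) - x⟫ + ‖P (x - lam • d) - x‖ ^ 2 ≤ 0 := by
  set w := P (x - lam • d) - x with hw
  have h := (hP (x - lam • d)).2 x hx
  have e1 : x - lam • d - P (x - lam • d) = -(lam • d) - w := by rw [hw]; abel
  have e2 : x - P (x - lam • d) = -w := by rw [hw]; abel
  rw [e1, e2, inner_neg_right, inner_sub_left, inner_neg_left, real_inner_smul_left,
    real_inner_self_eq_norm_sq] at h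
  linarith

theorem inner_nonneg_of_apply_eq (hP : IsMetricProjection U P) {x d : H} {lam : ℝ}
    (hlam : 0 < lam) (hfix : P (x - lam • d) = x) {ψ : H} (hψ : ψ ∈ U) :
    0 ≤ ⟪d, ψ - x⟫ := by
  have h := (hP (x - lam • d)).2 ψ hψ
  rw [hfix, sub_sub_cancel_left, inner_neg_left, real_inner_smul_left] at h
  nlinarith

end IsMetricProjection

theorem continuous_of_inner_eq_apply {H : Type*} [NormedAddCommGroup H] [InnerProductSpace ℝ H]
    {j' : H → H →L[ℝ] ℝ} (hcont : Continuous j') {g : H → H}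
    (hg : ∀ x w, j' x w = ⟪g x, w⟫) : Continuous g := by
  have h : InnerProductSpace.toDualMap ℝ H ∘ g = j' := by
    funext x; ext w; exact (hg x w).symm
  exact (InnerProductSpace.toDualMap ℝ H).isometry.comp_continuous_iff.mp (h ▸ hcont)

theorem Convex.seq_mem_of_add_smul_sub {E : Type*} [AddCommGroup E] [Module ℝ E] {U : Set E}
    (hU : Convex ℝ U) {φ p : ℕ → E} {β : ℕ → ℝ} (h0 : φ 0 ∈ U) (hp : ∀ k, p k ∈ U)
    (hβ : ∀ k, β k ∈ Icc 0 1) (hstep : ∀ k, φ (k + 1) = φ k + β k • (p k - φ k)) :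
    ∀ k, φ k ∈ U := by
  intro k
  induction k with
  | zero => exact h0
  | succ k ih => exact hstep k ▸ hU.add_smul_sub_mem ih (hp k) (hβ k)

theorem tendsto_zero_of_mul_tendsto_zero {α : Type*} {l : Filter α} {a b : α → ℝ} {b₀ : ℝ}
    (hab : Tendsto (fun k => a k * b k) l (𝓝 0)) (hb : Tendsto b l (𝓝 b₀)) (hb₀ : b₀ ≠ 0) :
    Tendsto a l (𝓝 0) := by
  have h := hab.div hb hb₀
  rw [zero_div] at h
  refine h.congr' ?_
  filter_upwards [hb.eventually_ne hb₀] with k hk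
  exact mul_div_cancel_right₀ _ hk

theorem tendsto_zero_of_sufficient_decrease {E : Type*} [TopologicalSpace E] {j : E → ℝ}
    (hj : Continuous j) {φ : ℕ → E} {a : ℕ → ℝ} {κ : ℝ} (hκ : 0 < κ) (ha : ∀ k, 0 ≤ a k)
    (hdecr : ∀ k, κ * a k ≤ j (φ k) - j (φ (k + 1)))
    {ψ : ℕ → ℕ} (hψ : StrictMono ψ) {φ₀ : E} (hacc : Tendsto (φ ∘ ψ) atTop (𝓝 φ₀)) :
    Tendsto a atTop (𝓝 0) := by
  have hanti : Antitone (j ∘ φ) :=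
    antitone_nat_of_succ_le fun k => by
      simp only [Function.comp_apply]
      linarith [hdecr k, mul_nonneg hκ.le (ha k)]
  have hlim : Tendsto (j ∘ φ) atTop (𝓝 (j φ₀)) :=
    (tendsto_iff_tendsto_subseq_of_antitone hanti hψ.tendsto_atTop).mpr
      ((hj.tendsto φ₀).comp hacc)
  have hgap : Tendsto (fun k => j (φ k) - j (φ (k + 1))) atTop (𝓝 0) := by
    simpa using hlim.sub (hlim.comp (tendsto_add_atTop_nat 1))
  refine squeeze_zero ha (fun k => (le_inv_mul_iff₀ hκ).mpr (hdecr k)) ?_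
  simpa using hgap.const_mul κ⁻¹

theorem armijo_sufficient_decrease {E : Type*} [NormedAddCommGroup E] [NormedSpace ℝ E]
    {j : E → ℝ} {x v : E} {d β c lam : ℝ} (hβ : 0 ≤ β) (hc : 0 ≤ c) (hlam : 0 < lam)
    (hdescent : lam * d + ‖v‖ ^ 2 ≤ 0) (harmijo : j (x + β • v) - j x ≤ c * β * d) :
    c / lam * (β * ‖v‖ ^ 2) ≤ j x - j (x + β • v) := by
  have h := mul_nonpos_of_nonneg_of_nonpos (by positivity : 0 ≤ c * β / lam) hdescent
  have e : c * β / lam * (lam * d + ‖v‖ ^ 2) = c * β * d + c / lam * (β * ‖v‖ ^ 2) := by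
    field_simp
  linarith

section Armijo

variable {E : Type*} [NormedAddCommGroup E] [NormedSpace ℝ E]
  {j : E → ℝ} {j' : E → E →L[ℝ] ℝ}

theorem exists_lt_apply_of_not_armijo (hdiff : ∀ x, HasFDerivAt j (j' x) x)
    {x v : E} {c t : ℝ} (ht : 0 < t) (hfail : ¬ j (x + t • v) - j x ≤ c * t * j' x v) :
    ∃ θ ∈ Ioo 0 t, c * j' x v < j' (x + θ • v) v := by
  have hline : ∀ s : ℝ, HasDerivAt (fun s : ℝ => j (x + s • v)) (j' (x + s • v) v) s := by
    intro s
    have h : HasDerivAt (fun s : ℝ => x + s • v) v s := by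
      simpa using ((hasDerivAt_id s).smul_const v).const_add x
    exact (hdiff _).comp_hasDerivAt s h
  obtain ⟨θ, hθ, hslope⟩ := exists_hasDerivAt_eq_slope (fun s : ℝ => j (x + s • v))
    (fun s => j' (x + s • v) v) ht
    (fun s _ => (hline s).continuousAt.continuousWithinAt) (fun s _ => hline s)
  refine ⟨θ, hθ, ?_⟩
  rw [hslope, zero_smul, add_zero, sub_zero, lt_div_iff₀ ht]
  linarith

theorem mul_le_of_not_armijo_of_tendsto (hdiff : ∀ x, HasFDerivAt j (j' x) x)
    (hcont : Continuous j') {x v : ℕ → E} {t : ℕ → ℝ} {x₀ v₀ : E} {c : ℝ}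
    (hx : Tendsto x atTop (𝓝 x₀)) (hv : Tendsto v atTop (𝓝 v₀)) (ht₀ : ∀ k, 0 < t k)
    (ht : Tendsto t atTop (𝓝 0))
    (hfail : ∀ᶠ k in atTop, ¬ j (x k + t k • v k) - j (x k) ≤ c * t k * j' (x k) (v k)) :
    c * j' x₀ v₀ ≤ j' x₀ v₀ := by
  choose! θ hθmem hθlt using
    fun k (hk : ¬ j (x k + t k • v k) - j (x k) ≤ c * t k * j' (x k) (v k)) =>
      exists_lt_apply_of_not_armijo hdiff (ht₀ k) hk
  have hθ : Tendsto θ atTop (𝓝 0) :=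
    tendsto_of_tendsto_of_tendsto_of_le_of_le' tendsto_const_nhds ht
      (hfail.mono fun k hk => (hθmem k hk).1.le) (hfail.mono fun k hk => (hθmem k hk).2.le)
  have heval : Continuous fun p : E × E => j' p.1 p.2 :=
    (hcont.comp continuous_fst).clm_apply continuous_snd
  have hbase : Tendsto (fun k => j' (x k) (v k)) atTop (𝓝 (j' x₀ v₀)) :=
    (heval.tendsto (x₀, v₀)).comp (hx.prodMk_nhds hv)
  have hshift : Tendsto (fun k => j' (x k + θ k • v k) (v k)) atTop (𝓝 (j' x₀ v₀)) := by
    have hy : Tendsto (fun k => x k + θ k • v k) atTop (𝓝 x₀) := by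
      simpa using hx.add (hθ.smul hv)
    exact (heval.tendsto (x₀, v₀)).comp (hy.prodMk_nhds hv)
  exact le_of_tendsto_of_tendsto (hbase.const_mul c) hshift
    (hfail.mono fun k hk => (hθlt k hk).le)

theorem mul_le_of_armijo_exponent_tendsto (hdiff : ∀ x, HasFDerivAt j (j' x) x)
    (hcont : Continuous j') {σ c : ℝ} (hσ : σ ∈ Ioo 0 1) {x v : ℕ → E} {m : ℕ → ℕ}
    {x₀ v₀ : E} (hx : Tendsto x atTop (𝓝 x₀)) (hv : Tendsto v atTop (𝓝 v₀))
    (hmin : ∀ k, ∀ n < m k, ¬ j (x k + σ ^ n • v k) - j (x k) ≤ c * σ ^ n * j' (x k) (v k))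
    (hm : Tendsto (fun k => σ ^ m k) atTop (𝓝 0)) :
    c * j' x₀ v₀ ≤ j' x₀ v₀ := by
  refine mul_le_of_not_armijo_of_tendsto hdiff hcont hx hv (t := fun k => σ ^ (m k - 1))
    (fun k => pow_pos hσ.1 _) ?_ ?_
  · refine squeeze_zero (fun k => (pow_pos hσ.1 _).le) (fun k => ?_)
      (by simpa using hm.div_const σ)
    rw [le_div_iff₀ hσ.1, ← pow_succ]
    exact pow_le_pow_of_le_one hσ.1.le hσ.2.le (by omega)
  · have hpos : ∀ᶠ k in atTop, 1 ≤ m k := by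
      filter_upwards [hm.eventually_lt_const one_pos] with k hk
      by_contra! h
      simp [Nat.lt_one_iff.mp h] at hk
    filter_upwards [hpos] with k hk using hmin k _ (by omega)

end Armijo

theorem projected_gradient_armijo_accumulation_critical_general
    {H : Type*} [NormedAddCommGroup H] [InnerProductSpace ℝ H]
    (U : Set H) (hclosed : IsClosed U) (hconv : Convex ℝ U)
    (P : H → H)
    -- `P` is the metric projection onto `U`
    (hP : ∀ x : H, P x ∈ U ∧ ∀ ψ ∈ U, ⟪x - P x, ψ - P x⟫ ≤ 0)
    (j : H → ℝ) (j' : H → H →L[ℝ] ℝ)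
    (hdiff : ∀ x : H, HasFDerivAt j (j' x) x)
    (hcont : Continuous j')  -- `j` is continuously Fréchet differentiable
    (g : H → H) (hg : ∀ x w : H, j' x w = ⟪g x, w⟫)  -- `g x = ∇j(x)`
    (lam : ℝ) (hlam : 0 < lam)
    (σ c : ℝ) (hσ : σ ∈ Set.Ioo (0:ℝ) 1) (hc : c ∈ Set.Ioo (0:ℝ) 1)
    (φ : ℕ → H) (v : ℕ → H) (m : ℕ → ℕ)
    (hφ0 : φ 0 ∈ U)
    (hv : ∀ k, v k = P (φ k - lam • g (φ k)) - φ k)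
    -- Armijo rule: `m k` is the smallest nonnegative integer satisfying the decrease test
    (harmijo : ∀ k, j (φ k + σ ^ (m k) • v k) - j (φ k) ≤ c * σ ^ (m k) * j' (φ k) (v k))
    (hmin : ∀ k, ∀ n < m k, ¬ (j (φ k + σ ^ n • v k) - j (φ k) ≤ c * σ ^ n * j' (φ k) (v k)))
    (hstep : ∀ k, φ (k + 1) = φ k + σ ^ (m k) • v k)
    -- `φ*` is an accumulation point of the sequence of iterates
    (φstar : H) (ψidx : ℕ → ℕ) (hψ : StrictMono ψidx)
    (hacc : Tendsto (fun k => φ (ψidx k)) atTop (𝓝 φstar)) :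
    ∀ ψ ∈ U, 0 ≤ j' φstar (ψ - φstar) := by
  have hproj : IsMetricProjection U P := hP
  set V : H → H := fun x => P (x - lam • g x) - x
  have hdescent : ∀ x ∈ U, lam * j' x (V x) + ‖V x‖ ^ 2 ≤ 0 := fun x hx => by
    rw [hg]; exact hproj.inner_add_norm_sq_nonpos hx _ _
  have hmem : ∀ k, φ k ∈ U := hconv.seq_mem_of_add_smul_sub hφ0 (fun k => (hP _).1)
    (fun k => ⟨(pow_pos hσ.1 _).le, pow_le_one₀ hσ.1.le hσ.2.le⟩) (fun k => hv k ▸ hstep k)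
  have hsteps : Tendsto (fun k => σ ^ m k * ‖v k‖ ^ 2) atTop (𝓝 0) := by
    refine tendsto_zero_of_sufficient_decrease
      (continuous_iff_continuousAt.2 fun x => (hdiff x).continuousAt) (div_pos hc.1 hlam)
      (fun k => by have := hσ.1; positivity) (fun k => ?_) hψ hacc
    rw [hstep k]
    exact armijo_sufficient_decrease (pow_pos hσ.1 _).le hc.1.le hlam
      (hv k ▸ hdescent _ (hmem k)) (harmijo k)
  have hVcont : Continuous V := (hproj.lipschitzWith_one.continuous.comp
    (continuous_id.sub (continuous_const.smul (continuous_of_inner_eq_apply hcont hg)))).sub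
    continuous_id
  have hvlim : Tendsto (v ∘ ψidx) atTop (𝓝 (V φstar)) := by
    simpa only [Function.comp_def, hv] using (hVcont.tendsto φstar).comp hacc
  have hfix : V φstar = 0 := by
    by_contra hne
    have hσm := tendsto_zero_of_mul_tendsto_zero (hsteps.comp hψ.tendsto_atTop)
      (hvlim.norm.pow 2) (pow_ne_zero 2 (norm_ne_zero_iff.mpr hne))
    have hle := mul_le_of_armijo_exponent_tendsto hdiff hcont hσ hacc hvlim
      (fun k => hmin (ψidx k)) hσm
    have hneg := hdescent φstar (hclosed.mem_of_tendsto hacc (.of_forall fun k => hmem _))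
    nlinarith [hc.2, pow_pos (norm_pos_iff.mpr hne) 2]
  intro ψ hψU
  rw [hg]
  exact hproj.inner_nonneg_of_apply_eq hlam (sub_eq_zero.mp hfix) hψU

/-- Global convergence of the projected gradient method with Armijo line search
(Theorem 5.2): every accumulation point `φ*` of the iterates
`φ_{k+1} = φ_k + β_k v_k`, `v_k = P_U(φ_k - λ ∇j(φ_k)) - φ_k`, with `β_k = σ^{m_k}`
determined by the Armijo rule, is first-order critical, i.e. satisfies
`j'(φ*)(ψ - φ*) ≥ 0` for all `ψ ∈ U`. -/
theorem projected_gradient_armijo_accumulation_critical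
    {H : Type*} [NormedAddCommGroup H] [InnerProductSpace ℝ H] [CompleteSpace H]
    (U : Set H) (hne : U.Nonempty) (hclosed : IsClosed U) (hconv : Convex ℝ U)
    (P : H → H)
    -- `P` is the metric projection onto `U`
    (hP : ∀ x : H, P x ∈ U ∧ ∀ ψ ∈ U, ⟪x - P x, ψ - P x⟫ ≤ 0)
    (j : H → ℝ) (j' : H → H →L[ℝ] ℝ)
    (hdiff : ∀ x : H, HasFDerivAt j (j' x) x)
    (hcont : Continuous j')  -- `j` is continuously Fréchet differentiable
    (g : H → H) (hg : ∀ x w : H, j' x w = ⟪g x, w⟫)  -- `g x = ∇j(x)`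
    (lam : ℝ) (hlam : 0 < lam)
    (σ c : ℝ) (hσ : σ ∈ Set.Ioo (0:ℝ) 1) (hc : c ∈ Set.Ioo (0:ℝ) 1)
    (φ : ℕ → H) (v : ℕ → H) (m : ℕ → ℕ)
    (hφ0 : φ 0 ∈ U)
    (hv : ∀ k, v k = P (φ k - lam • g (φ k)) - φ k)
    -- Armijo rule: `m k` is the smallest nonnegative integer satisfying the decrease test
    (harmijo : ∀ k, j (φ k + σ ^ (m k) • v k) - j (φ k) ≤ c * σ ^ (m k) * j' (φ k) (v k))
    (hmin : ∀ k, ∀ n < m k, ¬ (j (φ k + σ ^ n • v k) - j (φ k) ≤ c * σ ^ n * j' (φ k) (v k)))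
    (hstep : ∀ k, φ (k + 1) = φ k + σ ^ (m k) • v k)
    -- `φ*` is an accumulation point of the sequence of iterates
    (φstar : H) (ψidx : ℕ → ℕ) (hψ : StrictMono ψidx)
    (hacc : Tendsto (fun k => φ (ψidx k)) atTop (𝓝 φstar)) :
    ∀ ψ ∈ U, 0 ≤ j' φstar (ψ - φstar) :=
  projected_gradient_armijo_accumulation_critical_general U hclosed hconv P hP j j' hdiff hcont g hg
    lam hlam σ c hσ hc φ v m hφ0 hv harmijo hmin hstep φstar ψidx hψ hacc
end

section
/- If the map φ ↦ C(φ) from L^∞(Ω, ℝ^N) to the space of elasticity tensors is Fréchet differentiable and C(φ) is uniformly coercive near φ, then the control-to-state operator S : L^∞(Ω,ℝ^N) → H_D^1(Ω,ℝ^d), defined by S(φ) = u solving ∫_Ω ℰ(u):C(φ)ℰ(η) = ∫_Ω (1−φ^N) f·η + ∫_{Γ_g} g·η for all η ∈ H_D^1, is Fréchet differentiable, and u* = S'(φ)h is the unique solution of ∫_Ω ℰ(u*):C(φ)ℰ(η) = −∫_Ω ℰ(u):(C'(φ)h)ℰ(η) − ∫_Ω h^N f·η for all η ∈ H_D^1.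 -/
/-!
Testing the state equation against `η` and taking Riesz representatives turns it into the
operator equation `A(φ) S(φ) = F(φ)` on `H¹_D`, where `A(φ) = ℰ† C(φ) ℰ` depends differentiably
on `φ` and `F` is affine in `φ`. Korn's inequality and the coercivity of `C(φ₀)` make `A(φ₀)`
invertible (Lax–Milgram). Inversion is differentiable on the open set of invertible operators,
so `S = A⁻¹ F` near `φ₀` is differentiable with `A(φ₀) S'(φ₀)h = F'h - (A'h) S(φ₀)`, which is
the weak equation for `u*`; its solution is unique because `A(φ₀)` is injective.
-/

open MeasureTheory RealInnerProductSpace Metric Filter Topology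

section SolutionOperator

variable {𝕜 E V : Type*} [NontriviallyNormedField 𝕜] [NormedAddCommGroup E] [NormedSpace 𝕜 E]
  [NormedAddCommGroup V] [NormedSpace 𝕜 V]

theorem apply_eq_iff_eq_ringInverse_apply {T : V →L[𝕜] V} (hT : IsUnit T) {u w : V} :
    T u = w ↔ u = Ring.inverse T w := by
  constructor <;> rintro rfl
  · rw [← mul_apply_eq_comp, Ring.inverse_mul_cancel _ hT, one_apply_eq_self]
  · rw [← mul_apply_eq_comp, Ring.mul_inverse_cancel _ hT, one_apply_eq_self]

variable [CompleteSpace V] {A : E → V →L[𝕜] V} {A' : E →L[𝕜] V →L[𝕜] V} {F S : E → V}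
  {F' : E →L[𝕜] V} {x₀ : E}

theorem hasFDerivAt_of_eventually_apply_eq (hA : HasFDerivAt A A' x₀) (hF : HasFDerivAt F F' x₀)
    (hA₀ : IsUnit (A x₀)) (hS : ∀ᶠ x in 𝓝 x₀, A x (S x) = F x) :
    HasFDerivAt S ((Ring.inverse (A x₀)).comp (F' - A'.flip (S x₀))) x₀ := by
  have hS_eq : S =ᶠ[𝓝 x₀] fun x ↦ Ring.inverse (A x) (F x) := by
    filter_upwards [hA.continuousAt.eventually (Units.isOpen.mem_nhds hA₀), hS] with x hx hSx
    exact (apply_eq_iff_eq_ringInverse_apply hx).1 hSx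
  have hinv := hasFDerivAt_ringInverse (𝕜 := 𝕜) hA₀.unit
  rw [hA₀.unit_spec] at hinv
  convert (hinv.comp x₀ hA |>.clm_apply hF).congr_of_eventuallyEq hS_eq using 1
  have hinv_eq : ((hA₀.unit⁻¹ : (V →L[𝕜] V)ˣ) : V →L[𝕜] V) = Ring.inverse (A x₀) := by
    rw [← Ring.inverse_unit, hA₀.unit_spec]
  ext h
  simp [hinv_eq, hS_eq.self_of_nhds, sub_eq_add_neg]

theorem exists_hasFDerivAt_of_eventually_apply_eq (hA : HasFDerivAt A A' x₀)
    (hF : HasFDerivAt F F' x₀) (hA₀ : IsUnit (A x₀)) (hS : ∀ᶠ x in 𝓝 x₀, A x (S x) = F x) :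
    ∃ S' : E →L[𝕜] V, HasFDerivAt S S' x₀ ∧
      ∀ h u, A x₀ u = F' h - A' h (S x₀) ↔ u = S' h :=
  ⟨_, hasFDerivAt_of_eventually_apply_eq hA hF hA₀ hS,
    fun _ _ ↦ apply_eq_iff_eq_ringInverse_apply hA₀⟩

end SolutionOperator

theorem isUnit_of_coercive {V : Type*} [NormedAddCommGroup V] [InnerProductSpace ℝ V]
    [CompleteSpace V] {T : V →L[ℝ] V} {c : ℝ} (hc : 0 < c) (hT : ∀ u, c * ‖u‖ ^ 2 ≤ ⟪T u, u⟫) :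
    IsUnit T := by
  have hB : IsCoercive ((innerSL ℝ).comp T) := ⟨c, hc, fun u ↦ by simpa [sq, mul_assoc] using hT u⟩
  refine ⟨hB.continuousLinearEquivOfBilin.toUnit, ContinuousLinearMap.ext fun u ↦ ?_⟩
  refine ext_inner_right ℝ fun v ↦ ?_
  show ⟪hB.continuousLinearEquivOfBilin u, v⟫ = _
  rw [IsCoercive.continuousLinearEquivOfBilin_apply]
  rfl

section AdjointConj

variable {V W : Type*} [NormedAddCommGroup V] [InnerProductSpace ℝ V] [CompleteSpace V]
  [NormedAddCommGroup W] [InnerProductSpace ℝ W] [CompleteSpace W]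

noncomputable def adjointConjL (E : V →L[ℝ] W) : (W →L[ℝ] W) →L[ℝ] V →L[ℝ] V :=
  (ContinuousLinearMap.compL ℝ V W V (ContinuousLinearMap.adjoint E)).comp
    ((ContinuousLinearMap.compL ℝ V W W).flip E)

theorem inner_adjointConjL_apply (E : V →L[ℝ] W) (T : W →L[ℝ] W) (u v : V) :
    ⟪adjointConjL E T u, v⟫ = ⟪T (E u), E v⟫ := by
  show ⟪ContinuousLinearMap.adjoint E (T (E u)), v⟫ = _
  rw [ContinuousLinearMap.adjoint_inner_left]

theorem adjointConjL_apply_eq_iff {E : V →L[ℝ] W} {T : W →L[ℝ] W} {u r : V} :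
    adjointConjL E T u = r ↔ ∀ v, ⟪T (E u), E v⟫ = ⟪r, v⟫ := by
  simp only [ext_iff_inner_right ℝ (E := V), inner_adjointConjL_apply]

theorem isUnit_adjointConjL {E : V →L[ℝ] W} {cK θ : ℝ} (hKorn : ∀ u, ‖u‖ ≤ cK * ‖E u‖)
    (hθ : 0 < θ) {T : W →L[ℝ] W} (hT : ∀ w, θ * ‖w‖ ^ 2 ≤ ⟪T w, w⟫) :
    IsUnit (adjointConjL E T) := by
  refine isUnit_of_coercive (c := θ / (cK ^ 2 + 1)) (by positivity) fun u ↦ ?_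
  have hu : ‖u‖ ^ 2 ≤ (cK ^ 2 + 1) * ‖E u‖ ^ 2 := by
    nlinarith [pow_le_pow_left₀ (norm_nonneg u) (hKorn u) 2]
  calc θ / (cK ^ 2 + 1) * ‖u‖ ^ 2 ≤ θ * ‖E u‖ ^ 2 := by
        rw [div_mul_eq_mul_div, div_le_iff₀ (by positivity)]
        nlinarith
    _ ≤ ⟪adjointConjL E T u, u⟫ := (inner_adjointConjL_apply E T u u).symm ▸ hT (E u)

end AdjointConj

section WeightedLoad

variable {X E F : Type*} [MeasurableSpace X] {μ : Measure X} [NormedAddCommGroup E]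
  [NormedSpace ℝ E] [NormedAddCommGroup F] [InnerProductSpace ℝ F]

noncomputable def smulFunctionalL (ℓ : E →L[ℝ] ℝ) (f : Lp F 2 μ) : Lp E ⊤ μ →L[ℝ] Lp F 2 μ :=
  (((ContinuousLinearMap.lsmul ℝ ℝ).comp ℓ).holderL μ ⊤ 2 2).flip f

theorem coeFn_smulFunctionalL (ℓ : E →L[ℝ] ℝ) (f : Lp F 2 μ) (ψ : Lp E ⊤ μ) :
    smulFunctionalL ℓ f ψ =ᵐ[μ] fun x ↦ ℓ (ψ x) • f x :=
  ContinuousLinearMap.coeFn_holder _ _ _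

theorem integrable_functional_mul_inner (ℓ : E →L[ℝ] ℝ) (f g : Lp F 2 μ) (ψ : Lp E ⊤ μ) :
    Integrable (fun x ↦ ℓ (ψ x) * ⟪f x, g x⟫) μ := by
  refine (L2.integrable_inner (smulFunctionalL ℓ f ψ) g).congr ?_
  filter_upwards [coeFn_smulFunctionalL ℓ f ψ] with x hx
  rw [hx, real_inner_smul_left]

theorem inner_smulFunctionalL (ℓ : E →L[ℝ] ℝ) (f g : Lp F 2 μ) (ψ : Lp E ⊤ μ) :
    ⟪smulFunctionalL ℓ f ψ, g⟫ = ∫ x, ℓ (ψ x) * ⟪f x, g x⟫ ∂μ := by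
  rw [L2.inner_def]
  refine integral_congr_ae ?_
  filter_upwards [coeFn_smulFunctionalL ℓ f ψ] with x hx
  rw [hx, real_inner_smul_left]

theorem integral_one_sub_mul_inner (ℓ : E →L[ℝ] ℝ) (f g : Lp F 2 μ) (ψ : Lp E ⊤ μ) :
    ∫ x, (1 - ℓ (ψ x)) * ⟪f x, g x⟫ ∂μ = ⟪f, g⟫ - ⟪smulFunctionalL ℓ f ψ, g⟫ := by
  simp_rw [sub_mul, one_mul]
  rw [integral_sub (L2.integrable_inner f g) (integrable_functional_mul_inner ℓ f g ψ),
    L2.inner_def, inner_smulFunctionalL]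

end WeightedLoad

/-- Fréchet differentiability of the control-to-state operator (Theorem 3.1):
if `φ ↦ C(φ)` is Fréchet differentiable and uniformly coercive near `φ₀`, then
`S : L^∞(Ω,ℝ^N) → H¹_D(Ω,ℝ^d)`, `S(φ) = u` solving
`∫ ℰ(u):C(φ)ℰ(η) = ∫ (1-φ^N) f·η + ∫_{Γ_g} g·η` for all `η`, is Fréchet
differentiable, and `u* = S'(φ₀)h` is the unique solution of
`∫ ℰ(u*):C(φ₀)ℰ(η) = -∫ ℰ(u):(C'(φ₀)h)ℰ(η) - ∫ h^N f·η`.  Here `V` models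
`H¹_D(Ω,ℝ^d)` (embedded in `L²` by `ιV`), `W` models the `L²` space of strain fields,
`Estrain` is the strain map `ℰ`, and `gLin` the boundary load `η ↦ ∫_{Γ_g} g·η`. -/
theorem control_to_state_frechet_differentiable
    {N d : ℕ} (hN : 0 < N)
    {X : Type*} [MeasurableSpace X] (μ : Measure X)
    {V W : Type*} [NormedAddCommGroup V] [InnerProductSpace ℝ V] [CompleteSpace V]
    [NormedAddCommGroup W] [InnerProductSpace ℝ W] [CompleteSpace W]
    (ιV : V →L[ℝ] Lp (EuclideanSpace ℝ (Fin d)) 2 μ)  -- `H¹_D ↪ L²(Ω,ℝ^d)`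
    (Estrain : V →L[ℝ] W)  -- the strain map `u ↦ ℰ(u)`
    (cK : ℝ) (hKorn : ∀ u : V, ‖u‖ ≤ cK * ‖Estrain u‖)  -- Korn's inequality
    (f : Lp (EuclideanSpace ℝ (Fin d)) 2 μ)  -- volume force
    (gLin : V →L[ℝ] ℝ)  -- boundary load `η ↦ ∫_{Γ_g} g·η`
    (Cmap : Lp (EuclideanSpace ℝ (Fin N)) ⊤ μ → W →L[ℝ] W)  -- `φ ↦ C(φ)`
    (C' : Lp (EuclideanSpace ℝ (Fin N)) ⊤ μ →L[ℝ] (W →L[ℝ] W))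
    (φ₀ : Lp (EuclideanSpace ℝ (Fin N)) ⊤ μ)
    (hC : HasFDerivAt Cmap C' φ₀)  -- `C` Fréchet differentiable at `φ₀`
    (θ ε : ℝ) (hθ : 0 < θ) (hε : 0 < ε)
    -- uniform coercivity of `C` near `φ₀`
    (hcoer : ∀ φ ∈ ball φ₀ ε, ∀ w : W, θ * ‖w‖ ^ 2 ≤ ⟪Cmap φ w, w⟫)
    (S : Lp (EuclideanSpace ℝ (Fin N)) ⊤ μ → V)
    -- `S(φ)` solves the state equation for `φ` near `φ₀`
    (hS : ∀ φ ∈ ball φ₀ ε, ∀ η : V,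
      ⟪Cmap φ (Estrain (S φ)), Estrain η⟫ =
        (∫ x, (1 - (φ : X → EuclideanSpace ℝ (Fin N)) x ⟨N - 1, by omega⟩) *
          ⟪(f : X → EuclideanSpace ℝ (Fin d)) x, (ιV η : X → EuclideanSpace ℝ (Fin d)) x⟫ ∂μ)
          + gLin η) :
    ∃ S' : Lp (EuclideanSpace ℝ (Fin N)) ⊤ μ →L[ℝ] V, HasFDerivAt S S' φ₀ ∧
      ∀ h : Lp (EuclideanSpace ℝ (Fin N)) ⊤ μ,
        (∀ η : V, ⟪Cmap φ₀ (Estrain (S' h)), Estrain η⟫ =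
          -⟪C' h (Estrain (S φ₀)), Estrain η⟫
            - ∫ x, ((h : X → EuclideanSpace ℝ (Fin N)) x ⟨N - 1, by omega⟩) *
                ⟪(f : X → EuclideanSpace ℝ (Fin d)) x, (ιV η : X → EuclideanSpace ℝ (Fin d)) x⟫ ∂μ) ∧
        (∀ u' : V, (∀ η : V, ⟪Cmap φ₀ (Estrain u'), Estrain η⟫ =
          -⟪C' h (Estrain (S φ₀)), Estrain η⟫
            - ∫ x, ((h : X → EuclideanSpace ℝ (Fin N)) x ⟨N - 1, by omega⟩) *
                ⟪(f : X → EuclideanSpace ℝ (Fin d)) x, (ιV η : X → EuclideanSpace ℝ (Fin d)) x⟫ ∂μ) →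
          u' = S' h) := by
  set i : Fin N := ⟨N - 1, by omega⟩
  set G := (ContinuousLinearMap.adjoint ιV).comp (smulFunctionalL (EuclideanSpace.proj i) f)
  have hG : ∀ ψ η, ⟪G ψ, η⟫ = ∫ x, (ψ : X → EuclideanSpace ℝ (Fin N)) x i *
      ⟪(f : X → EuclideanSpace ℝ (Fin d)) x, (ιV η : X → EuclideanSpace ℝ (Fin d)) x⟫ ∂μ :=
    fun ψ η ↦ by
      rw [ContinuousLinearMap.comp_apply, ContinuousLinearMap.adjoint_inner_left,
        inner_smulFunctionalL]
      rfl
  have hstate : ∀ φ ∈ ball φ₀ ε, adjointConjL Estrain (Cmap φ) (S φ) =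
      ContinuousLinearMap.adjoint ιV f + (InnerProductSpace.toDual ℝ V).symm gLin - G φ := by
    refine fun φ hφ ↦ adjointConjL_apply_eq_iff.2 fun η ↦ ?_
    have hload := integral_one_sub_mul_inner (EuclideanSpace.proj i) f (ιV η) φ
    simp only [PiLp.proj_apply] at hload
    rw [hS φ hφ, hload, inner_sub_left, inner_add_left, ContinuousLinearMap.comp_apply,
      ContinuousLinearMap.adjoint_inner_left, ContinuousLinearMap.adjoint_inner_left,
      InnerProductSpace.toDual_symm_apply]
    ring
  obtain ⟨S', hS', hlin⟩ := exists_hasFDerivAt_of_eventually_apply_eq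
    ((adjointConjL Estrain).hasFDerivAt.comp φ₀ hC) (G.hasFDerivAt.const_sub _)
    (isUnit_adjointConjL hKorn hθ (hcoer φ₀ (mem_ball_self hε)))
    (eventually_of_mem (ball_mem_nhds φ₀ hε) hstate)
  refine ⟨S', hS', fun h ↦ ?_⟩
  have hweak : ∀ u, (∀ η : V, ⟪Cmap φ₀ (Estrain u), Estrain η⟫ =
        -⟪C' h (Estrain (S φ₀)), Estrain η⟫ - ∫ x, (h : X → EuclideanSpace ℝ (Fin N)) x i *
          ⟪(f : X → EuclideanSpace ℝ (Fin d)) x, (ιV η : X → EuclideanSpace ℝ (Fin d)) x⟫ ∂μ) ↔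
      u = S' h := fun u ↦ by
    rw [← hlin, Function.comp_apply, adjointConjL_apply_eq_iff]
    simp only [neg_apply, ContinuousLinearMap.comp_apply, inner_sub_left,
      inner_neg_left, inner_adjointConjL_apply, hG, neg_sub_comm]
  exact ⟨(hweak _).2 rfl, fun u ↦ (hweak u).1⟩
end

section
/- For the quadratic interpolation C(φ) = ∑_{i,j=1}^N C^{max{i,j}} φ^i φ^j with constant elasticity tensors C^1, ..., C^N ordered from high to low stiffness (each symmetric positive semidefinite on symmetric matrices, with C^N positive definite), the following hold: (a) C(e_i) = C^i for each unit vector e_i; (b) for φ in the Gibbs simplex, C(φ) is positive definite on symmetric matrices; (c) φ ↦ C(φ) is a polynomial, hence Fréchet differentiable from L^∞(Ω,ℝ^N) to L^∞. -/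
open Finset Matrix

/-- Properties of the quadratic interpolation `C(φ) = ∑_{i,j} C^{max{i,j}} φ^i φ^j` of
the elasticity tensors `C^1, …, C^N` (ordered from high to low stiffness, each
positive definite on symmetric matrices): (a) `C(e_i) = C^i`; (b) `C(φ)` is positive
definite on symmetric matrices for `φ` in the Gibbs simplex; (c) `φ ↦ C(φ)` is a
polynomial, hence (entrywise) smooth, in particular Fréchet differentiable. -/
theorem quadratic_interpolation_elasticity_tensor
    {d N : ℕ} (hN : 1 ≤ N)
    (Ct : Fin N → (Matrix (Fin d) (Fin d) ℝ →ₗ[ℝ] Matrix (Fin d) (Fin d) ℝ))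
    -- elasticity symmetry: each `Cⁱ` is self-adjoint w.r.t. the Frobenius pairing
    (hselfadj : ∀ i (A B : Matrix (Fin d) (Fin d) ℝ),
      ∑ k, ∑ l, (Ct i A) k l * B k l = ∑ k, ∑ l, A k l * (Ct i B) k l)
    -- each `Cⁱ` is positive definite on nonzero symmetric matrices
    (hpos : ∀ i (A : Matrix (Fin d) (Fin d) ℝ), Aᵀ = A → A ≠ 0 →
      0 < ∑ k, ∑ l, (Ct i A) k l * A k l)
    -- the tensors are ordered from high to low stiffness
    (hordered : ∀ i j : Fin N, i ≤ j → ∀ A : Matrix (Fin d) (Fin d) ℝ, Aᵀ = A →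
      ∑ k, ∑ l, (Ct j A) k l * A k l ≤ ∑ k, ∑ l, (Ct i A) k l * A k l) :
    let Cfun : EuclideanSpace ℝ (Fin N) → (Matrix (Fin d) (Fin d) ℝ →ₗ[ℝ] Matrix (Fin d) (Fin d) ℝ) :=
      fun φ => ∑ i, ∑ j, (φ i * φ j) • Ct (max i j)
    -- (a) `C(eᵢ) = Cⁱ`
    (∀ i : Fin N, Cfun (EuclideanSpace.single i 1) = Ct i) ∧
    -- (b) positive definiteness on symmetric matrices for `φ` in the Gibbs simplex
    (∀ φ : EuclideanSpace ℝ (Fin N), (∀ i, 0 ≤ φ i) → ∑ i, φ i = 1 →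
      ∀ A : Matrix (Fin d) (Fin d) ℝ, Aᵀ = A → A ≠ 0 →
        0 < ∑ k, ∑ l, (Cfun φ A) k l * A k l) ∧
    -- (c) `φ ↦ C(φ)` is smooth (entrywise), being a polynomial
    (∀ (A : Matrix (Fin d) (Fin d) ℝ) (k l : Fin d),
      ContDiff ℝ (⊤ : ℕ∞) (fun φ : EuclideanSpace ℝ (Fin N) => (Cfun φ A) k l)) := by
  intro Cfun
  have hCfun_apply : ∀ (φ : EuclideanSpace ℝ (Fin N)) (A : Matrix (Fin d) (Fin d) ℝ) (k l : Fin d),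
      (Cfun φ A) k l = ∑ i, ∑ j, φ i * φ j * (Ct (max i j) A) k l := by
    intro φ A k l
    simp [Cfun, LinearMap.sum_apply, LinearMap.smul_apply, Matrix.sum_apply,
      Matrix.smul_apply, smul_eq_mul]
  have swap4 : ∀ (g : Fin N → Fin N → Fin d → Fin d → ℝ),
      (∑ k, ∑ l, ∑ i, ∑ j, g i j k l) = ∑ i, ∑ j, ∑ k, ∑ l, g i j k l := by
    intro g
    rw [show (∑ k, ∑ l, ∑ i, ∑ j, g i j k l) = ∑ k, ∑ i, ∑ l, ∑ j, g i j k l from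
      Finset.sum_congr rfl fun k _ => Finset.sum_comm]
    rw [Finset.sum_comm]
    refine Finset.sum_congr rfl fun i _ => ?_
    rw [show (∑ k, ∑ l, ∑ j, g i j k l) = ∑ k, ∑ j, ∑ l, g i j k l from
      Finset.sum_congr rfl fun k _ => Finset.sum_comm]
    exact Finset.sum_comm
  have hquad : ∀ (φ : EuclideanSpace ℝ (Fin N)) (A : Matrix (Fin d) (Fin d) ℝ),
      ∑ k, ∑ l, (Cfun φ A) k l * A k l
        = ∑ i, ∑ j, φ i * φ j * (∑ k, ∑ l, (Ct (max i j) A) k l * A k l) := by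
    intro φ A
    simp only [hCfun_apply, Finset.sum_mul]
    rw [swap4 fun i j k l => φ i * φ j * (Ct (max i j) A) k l * A k l]
    simp only [Finset.mul_sum, mul_assoc]
  refine ⟨?_, ?_, ?_⟩
  · intro i
    have h1 : ∀ j, (EuclideanSpace.single i (1:ℝ)) j = if j = i then 1 else 0 := by
      intro j; simp [EuclideanSpace.single_apply]
    simp only [Cfun, h1]
    rw [Finset.sum_eq_single i]
    · rw [Finset.sum_eq_single i]
      · simp
      · intro j _ hj; simp [hj]
      · simp
    · intro j _ hj
      simp [hj]
    · simp
  · intro φ hφ hsum A hsymm hA0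
    rw [hquad]
    set m : Fin N := ⟨N - 1, by omega⟩ with hm
    have hmax : ∀ i : Fin N, i ≤ m := by
      intro i; simpa [hm, Fin.le_def] using Nat.le_sub_one_of_lt i.isLt
    have hlow : ∀ i j : Fin N,
        ∑ k, ∑ l, (Ct m A) k l * A k l ≤ ∑ k, ∑ l, (Ct (max i j) A) k l * A k l := by
      intro i j; exact hordered _ m (hmax _) A hsymm
    have hQm : 0 < ∑ k, ∑ l, (Ct m A) k l * A k l := hpos m A hsymm hA0
    have key : ∑ i, ∑ j, φ i * φ j * (∑ k, ∑ l, (Ct m A) k l * A k l)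
        ≤ ∑ i, ∑ j, φ i * φ j * (∑ k, ∑ l, (Ct (max i j) A) k l * A k l) := by
      refine Finset.sum_le_sum fun i _ => Finset.sum_le_sum fun j _ => ?_
      exact mul_le_mul_of_nonneg_left (hlow i j) (mul_nonneg (hφ i) (hφ j))
    refine lt_of_lt_of_le ?_ key
    have hfac : ∑ i, ∑ j, φ i * φ j * (∑ k, ∑ l, (Ct m A) k l * A k l)
        = (∑ i, φ i) * (∑ j, φ j) * (∑ k, ∑ l, (Ct m A) k l * A k l) := by
      rw [Finset.sum_mul_sum, Finset.sum_mul]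
      exact Finset.sum_congr rfl fun i _ => by rw [Finset.sum_mul]
    rw [hfac, hsum]; simpa using hQm
  · intro A k l
    have heq : (fun φ : EuclideanSpace ℝ (Fin N) => (Cfun φ A) k l)
        = fun φ => ∑ i, ∑ j, φ i * φ j * (Ct (max i j) A) k l := by
      funext φ; exact hCfun_apply φ A k l
    rw [heq]
    refine ContDiff.sum fun i _ => ContDiff.sum fun j _ => ?_
    have hp : ∀ a : Fin N, ContDiff ℝ (⊤ : ℕ∞) (fun φ : EuclideanSpace ℝ (Fin N) => φ a) := by
      intro a
      exact (EuclideanSpace.proj a : EuclideanSpace ℝ (Fin N) →L[ℝ] ℝ).contDiff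
    exact ((hp i).mul (hp j)).mul contDiff_const
end

section
/- Given the state u and a solution p of the adjoint equation, the Fréchet derivative of the reduced mean compliance functional j(φ) = α F(S(φ), φ) + γ Ê^ε(φ) (case β = 0, adjoint p = α u) in direction h equals γε ∫_Ω ∇φ : ∇h + (γ/ε) ∫_Ω Ψ₀'(φ)·h − α ∫_Ω ℰ(u) : (C'(φ)h) ℰ(u), where u = S(φ). -/
/-!
Differentiating the state equation `⟨C(φ) ℰ(S φ), ℰ η⟩ = F η` in `φ` gives the linearized state
equation; testing it with `η = S φ₀` and using the symmetry of `C(φ₀)` turns the derivative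
`F (S' h)` of the compliance into `-⟨C'(h) ℰ(u), ℰ(u)⟩`. This is the self-adjointness of mean
compliance (the adjoint state is `α u`), so no adjoint equation has to be solved.
-/

open RealInnerProductSpace

section StateEquation

variable {P V W : Type*} [NormedAddCommGroup P] [NormedSpace ℝ P]
  [NormedAddCommGroup V] [NormedSpace ℝ V] [NormedAddCommGroup W] [InnerProductSpace ℝ W]
  {Estrain : V →L[ℝ] W} {F : V →L[ℝ] ℝ} {Cop : P → W →L[ℝ] W} {Cop' : P →L[ℝ] (W →L[ℝ] W)}
  {S : P → V} {S' : P →L[ℝ] V} {φ₀ : P}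

theorem linearized_state_equation (hCdiff : HasFDerivAt Cop Cop' φ₀)
    (hSdiff : HasFDerivAt S S' φ₀)
    (hS : ∀ φ : P, ∀ η : V, ⟪Cop φ (Estrain (S φ)), Estrain η⟫ = F η) (h : P) (η : V) :
    ⟪Cop φ₀ (Estrain (S' h)) + Cop' h (Estrain (S φ₀)), Estrain η⟫ = 0 := by
  have hprod : HasFDerivAt (fun φ => ⟪Cop φ (Estrain (S φ)), Estrain η⟫)
      ((fderivInnerCLM ℝ (Cop φ₀ (Estrain (S φ₀)), Estrain η)).comp
        (((Cop φ₀).comp (Estrain.comp S') + Cop'.flip (Estrain (S φ₀))).prod 0)) φ₀ :=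
    (hCdiff.clm_apply (Estrain.hasFDerivAt.comp φ₀ hSdiff)).inner ℝ (hasFDerivAt_const _ _)
  have hconst : HasFDerivAt (fun φ => ⟪Cop φ (Estrain (S φ)), Estrain η⟫) (0 : P →L[ℝ] ℝ) φ₀ := by
    simpa only [hS] using hasFDerivAt_const (F η) φ₀
  simpa using congrArg (· h) (hprod.unique hconst)

theorem compliance_sensitivity (hCdiff : HasFDerivAt Cop Cop' φ₀)
    (hCsym : ∀ (w₁ w₂ : W), ⟪Cop φ₀ w₁, w₂⟫ = ⟪Cop φ₀ w₂, w₁⟫)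
    (hSdiff : HasFDerivAt S S' φ₀)
    (hS : ∀ φ : P, ∀ η : V, ⟪Cop φ (Estrain (S φ)), Estrain η⟫ = F η) (h : P) :
    F (S' h) = -⟪Cop' h (Estrain (S φ₀)), Estrain (S φ₀)⟫ := by
  have hlin := linearized_state_equation hCdiff hSdiff hS h (S φ₀)
  rw [inner_add_left, hCsym] at hlin
  rw [← hS φ₀ (S' h)]
  linarith

end StateEquation

theorem hasFDerivAt_ginzburgLandau {P W₂ : Type*} [NormedAddCommGroup P] [NormedSpace ℝ P]
    [NormedAddCommGroup W₂] [InnerProductSpace ℝ W₂] (Dgrad : P →L[ℝ] W₂) {Pot : P → ℝ}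
    {Pot' : P →L[ℝ] ℝ} {φ₀ : P} (hPot : HasFDerivAt Pot Pot' φ₀) (ε : ℝ) :
    HasFDerivAt (fun φ => (ε / 2) * ‖Dgrad φ‖ ^ 2 + (1 / ε) * Pot φ)
      (ε • (innerSL ℝ (Dgrad φ₀)).comp Dgrad + (1 / ε) • Pot') φ₀ := by
  refine ((Dgrad.hasFDerivAt.norm_sq.const_mul (ε / 2)).add
    (hPot.const_mul (1 / ε))).congr_fderiv ?_
  rw [← Nat.cast_smul_eq_nsmul ℝ, smul_smul, Nat.cast_ofNat, div_mul_cancel₀ ε two_ne_zero]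

/-- `P` models the phase space `H¹ ∩ L^∞`, `V` models `H¹_D`, `W` the `L²` strain
fields, `W₂` the `L²` gradients of phase fields, `Pot φ = ∫ Ψ₀(φ)` with derivative
`Pot'` (i.e. `Pot' h = ∫ Ψ₀'(φ₀)·h`), and `F : V →L[ℝ] ℝ` is the load `η ↦ ∫_{Γ_g} g·η`. -/
theorem reduced_mean_compliance_derivative_general
    {P V W W₂ : Type*} [NormedAddCommGroup P] [NormedSpace ℝ P]
    [NormedAddCommGroup V] [InnerProductSpace ℝ V]
    [NormedAddCommGroup W] [InnerProductSpace ℝ W]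
    [NormedAddCommGroup W₂] [InnerProductSpace ℝ W₂]
    (Estrain : V →L[ℝ] W)   -- the strain map `u ↦ ℰ(u)`
    (Dgrad : P →L[ℝ] W₂)    -- the gradient `φ ↦ ∇φ`
    (F : V →L[ℝ] ℝ)         -- the load functional (mean compliance, `f = 0`)
    (Cop : P → W →L[ℝ] W) (Cop' : P →L[ℝ] (W →L[ℝ] W)) (φ₀ : P)
    (hCdiff : HasFDerivAt Cop Cop' φ₀)
    (hCsym : ∀ φ (w₁ w₂ : W), ⟪Cop φ w₁, w₂⟫ = ⟪Cop φ w₂, w₁⟫)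
    (S : P → V) (S' : P →L[ℝ] V) (hSdiff : HasFDerivAt S S' φ₀)
    -- the state equation `⟨ℰ(S φ), ℰ(η)⟩_{C(φ)} = F(η)` for all `φ` and `η`
    (hS : ∀ φ : P, ∀ η : V, ⟪Cop φ (Estrain (S φ)), Estrain η⟫ = F η)
    (Pot : P → ℝ) (Pot' : P →L[ℝ] ℝ) (hPot : HasFDerivAt Pot Pot' φ₀)
    (α γ ε : ℝ) :
    let j : P → ℝ := fun φ =>
      α * F (S φ) + γ * ((ε / 2) * ‖Dgrad φ‖ ^ 2 + (1 / ε) * Pot φ)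
    ∃ D : P →L[ℝ] ℝ, HasFDerivAt j D φ₀ ∧
      ∀ h : P, D h = γ * ε * ⟪Dgrad φ₀, Dgrad h⟫ + (γ / ε) * Pot' h
        - α * ⟪Cop' h (Estrain (S φ₀)), Estrain (S φ₀)⟫ := by
  refine ⟨_, ((F.hasFDerivAt.comp φ₀ hSdiff).const_mul α).add
    ((hasFDerivAt_ginzburgLandau Dgrad hPot ε).const_mul γ), fun h => ?_⟩
  have hF := compliance_sensitivity hCdiff (hCsym φ₀) hSdiff hS h
  simp only [add_apply, smul_apply,
    ContinuousLinearMap.comp_apply, innerSL_apply_apply, smul_eq_mul, hF]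
  ring

/-- Derivative of the reduced mean compliance functional (case `β = 0`, `f = 0`,
adjoint `p = αu`): for `j(φ) = α F(S(φ)) + γ Ê^ε(φ)` with
`Ê^ε(φ) = (ε/2)‖∇φ‖² + (1/ε)∫ Ψ₀(φ)`, one has
`j'(φ₀)h = γε ∫ ∇φ₀:∇h + (γ/ε) ∫ Ψ₀'(φ₀)·h − α ∫ ℰ(u):(C'(φ₀)h)ℰ(u)`, `u = S(φ₀)`.
Here `P` models the phase space `H¹ ∩ L^∞`, `V` models `H¹_D`, `W` the `L²` strain
fields, `W₂` the `L²` gradients of phase fields, `Pot φ = ∫ Ψ₀(φ)` with derivative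
`Pot'` (i.e. `Pot' h = ∫ Ψ₀'(φ₀)·h`), and `F : V →L[ℝ] ℝ` is the load `η ↦ ∫_{Γ_g} g·η`. -/
theorem reduced_mean_compliance_derivative
    {P V W W₂ : Type*} [NormedAddCommGroup P] [NormedSpace ℝ P]
    [NormedAddCommGroup V] [InnerProductSpace ℝ V] [CompleteSpace V]
    [NormedAddCommGroup W] [InnerProductSpace ℝ W] [CompleteSpace W]
    [NormedAddCommGroup W₂] [InnerProductSpace ℝ W₂]
    (Estrain : V →L[ℝ] W)   -- the strain map `u ↦ ℰ(u)`
    (Dgrad : P →L[ℝ] W₂)    -- the gradient `φ ↦ ∇φ`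
    (F : V →L[ℝ] ℝ)         -- the load functional (mean compliance, `f = 0`)
    (Cop : P → W →L[ℝ] W) (Cop' : P →L[ℝ] (W →L[ℝ] W)) (φ₀ : P)
    (hCdiff : HasFDerivAt Cop Cop' φ₀)
    (hCsym : ∀ φ (w₁ w₂ : W), ⟪Cop φ w₁, w₂⟫ = ⟪Cop φ w₂, w₁⟫)
    (S : P → V) (S' : P →L[ℝ] V) (hSdiff : HasFDerivAt S S' φ₀)
    -- the state equation `⟨ℰ(S φ), ℰ(η)⟩_{C(φ)} = F(η)` for all `φ` and `η`
    (hS : ∀ φ : P, ∀ η : V, ⟪Cop φ (Estrain (S φ)), Estrain η⟫ = F η)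
    (Pot : P → ℝ) (Pot' : P →L[ℝ] ℝ) (hPot : HasFDerivAt Pot Pot' φ₀)
    (α γ ε : ℝ) (hγ : 0 < γ) (hε : 0 < ε) :
    let j : P → ℝ := fun φ =>
      α * F (S φ) + γ * ((ε / 2) * ‖Dgrad φ‖ ^ 2 + (1 / ε) * Pot φ)
    ∃ D : P →L[ℝ] ℝ, HasFDerivAt j D φ₀ ∧
      ∀ h : P, D h = γ * ε * ⟪Dgrad φ₀, Dgrad h⟫ + (γ / ε) * Pot' h
        - α * ⟪Cop' h (Estrain (S φ₀)), Estrain (S φ₀)⟫ :=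
  reduced_mean_compliance_derivative_general Estrain Dgrad F Cop Cop' φ₀ hCdiff hCsym S S' hSdiff hS
    Pot Pot' hPot α γ ε
end
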